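/- arXiv:2408.08429 — 3 statements merged into one kernel-verified Lean document; each statement's English description precedes it below -/
import Mathlib

section
/- If a state has only the three nonzero coefficients corresponding to charges p¹, p², q₀ (i.e., c₁ = −p¹, c₂ = −p², c₇ = q₀, others zero) with p¹p²q₀ ≠ 0, then its Cayley hyperdeterminant D₃ vanishes, but none of the three pairs of conditions (c₀c₃ = c₁c₂ and c₅c₆ = c₄c₇), (c₁c₄ = c₀c₅ and c₃c₆ = c₂c₇), (c₃c₅ = c₁c₇ and c₂c₄ = c₀c₆) hold simultaneously. -/
theorem stmt_3 (p1 p2 q0 : ℝ) (hne : p1 * p2 * q0 ≠ 0)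
    (c0 c1 c2 c3 c4 c5 c6 c7 : ℝ)
    (h0 : c0 = 0) (h1 : c1 = -p1) (h2 : c2 = -p2) (h3 : c3 = 0)
    (h4 : c4 = 0) (h5 : c5 = 0) (h6 : c6 = 0) (h7 : c7 = q0) :
    (c0*c7 - c1*c6 - c2*c5 + c3*c4)^2 - 4*(c0*c3 - c1*c2)*(c4*c7 - c5*c6) = 0
    ∧ ¬ (c0*c3 = c1*c2 ∧ c5*c6 = c4*c7)
    ∧ ¬ (c1*c4 = c0*c5 ∧ c3*c6 = c2*c7)
    ∧ ¬ (c3*c5 = c1*c7 ∧ c2*c4 = c0*c6) := by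
  obtain ⟨hp12, hq0⟩ := mul_ne_zero_iff.mp hne
  obtain ⟨hp1, hp2⟩ := mul_ne_zero_iff.mp hp12
  subst h0 h1 h2 h3 h4 h5 h6 h7
  refine ⟨by ring, ?_, ?_, ?_⟩ <;> simp [hp1, hp2, hq0]
end

section
/- For the black hole with nonzero charges p¹, p², q₀, q₁, q₂ satisfying p¹q₁ = p²q₂ (and p⁰ = p³ = q₃ = 0, p²((p²)² + q₁²) ≠ 0, q₀ ≠ 0, p¹ ≠ 0), the invariants are h₁ = ((p¹/p²)((p²)² + q₁²))², h₂ = (p²q₀)², h₃ = (p¹q₀)², and the Schmidt coefficients are ρ₀ = |p²q₀|/√((p²)² + q₁²), ρ₂ = √((p²)² + q₁²), ρ₃ = (|p¹|/|p²|)√((p²)² + q₁²), where ρ₀² = √(h₁h₂h₃)/h₁, ρ₂² = √(h₁h₂h₃)/h₃, ρ₃² = √(h₁h₂h₃)/h₂. -/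
theorem stmt_11 (p0 p1 p2 p3 q0 q1 q2 q3 : ℝ)
    (hp0 : p0 = 0) (hp3 : p3 = 0) (hq3 : q3 = 0)
    (hrel : p1*q1 = p2*q2)
    (hne : p2 * (p2^2 + q1^2) ≠ 0) (hq0 : q0 ≠ 0) (hp1 : p1 ≠ 0)
    (h1 h2 h3 : ℝ)
    (hh1 : h1 = (p0*q3 - p1*p2 - p3*q0 - q2*q1)^2)
    (hh2 : h2 = (p0*q2 - p1*p3 - p2*q0 - q3*q1)^2)
    (hh3 : h3 = (p0*q1 - p2*p3 - p1*q0 - q3*q2)^2)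
    (ρ0 ρ2 ρ3 : ℝ) (hρ0 : 0 ≤ ρ0) (hρ2 : 0 ≤ ρ2) (hρ3 : 0 ≤ ρ3)
    (e0 : ρ0^2 = Real.sqrt (h1*h2*h3) / h1)
    (e2 : ρ2^2 = Real.sqrt (h1*h2*h3) / h3)
    (e3 : ρ3^2 = Real.sqrt (h1*h2*h3) / h2) :
    h1 = ((p1/p2) * (p2^2 + q1^2))^2 ∧ h2 = (p2*q0)^2 ∧ h3 = (p1*q0)^2
    ∧ ρ0 = |p2*q0| / Real.sqrt (p2^2 + q1^2)
    ∧ ρ2 = Real.sqrt (p2^2 + q1^2)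
    ∧ ρ3 = (|p1| / |p2|) * Real.sqrt (p2^2 + q1^2) := by
  have hp2 : p2 ≠ 0 := fun h => hne (by simp [h])
  have hS : 0 < p2^2 + q1^2 := by positivity
  subst hp0 hp3 hq3
  have hA1 : h1 = ((p1/p2) * (p2^2 + q1^2))^2 := by
    rw [hh1, show (0*0 - p1*p2 - 0*q0 - q2*q1) = -(p1/p2*(p2^2+q1^2)) from by
      field_simp; linear_combination q1 * hrel]
    ring
  have hA2 : h2 = (p2*q0)^2 := by rw [hh2]; ring
  have hA3 : h3 = (p1*q0)^2 := by rw [hh3]; ring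
  have hprod : h1*h2*h3 = (p1^2 * (p2^2+q1^2) * q0^2)^2 := by
    rw [hA1, hA2, hA3]; field_simp
  have hsqrt : Real.sqrt (h1*h2*h3) = p1^2 * (p2^2+q1^2) * q0^2 := by
    rw [hprod, Real.sqrt_sq (by positivity)]
  refine ⟨hA1, hA2, hA3, ?_, ?_, ?_⟩
  · have : ρ0^2 = (p2*q0)^2 / (p2^2+q1^2) := by
      rw [e0, hsqrt, hA1]; field_simp
    rw [← Real.sqrt_sq hρ0, this, Real.sqrt_div (by positivity),
      Real.sqrt_sq_eq_abs]
  · have : ρ2^2 = p2^2+q1^2 := by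
      rw [e2, hsqrt, hA3]; field_simp
    rw [← Real.sqrt_sq hρ2, this]
  · have : ρ3^2 = (p1/p2)^2 * (p2^2+q1^2) := by
      rw [e3, hsqrt, hA2]; field_simp
    rw [← Real.sqrt_sq hρ3, this, Real.sqrt_mul (by positivity),
      Real.sqrt_sq_eq_abs, abs_div]
end

section
/- If two three-qubit W-class states have Acín Schmidt decompositions λ₀|000⟩ + λ₁e^{iφ}|100⟩ + λ₂|101⟩ + λ₃|110⟩ and μ₀|000⟩ + μ₁e^{iψ}|100⟩ + μ₂|101⟩ + μ₃|110⟩ with λᵢ = μᵢ for all i (regardless of the phases φ, ψ), then the two states are LU equivalent. -/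
/-!
The phase gate diag(1, e^{i(ψ-φ)}) on the first qubit turns the phase e^{iφ} of |100⟩ into e^{iψ},
but also multiplies |101⟩ and |110⟩ by e^{i(ψ-φ)}. Each of these two basis states has exactly one
of the last two qubits equal to 1, so the inverse phase gate on both the second and the third qubit
restores them while leaving |000⟩ and |100⟩ untouched.
-/

/-- Action of local operators A ⊗ B ⊗ C on a three-qubit coefficient tensor. -/
noncomputable def luAct (A B C : Matrix (Fin 2) (Fin 2) ℂ)
    (ψ : Fin 2 → Fin 2 → Fin 2 → ℂ) : Fin 2 → Fin 2 → Fin 2 → ℂ :=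
  fun i j k => ∑ a : Fin 2, ∑ b : Fin 2, ∑ c : Fin 2, A i a * B j b * C k c * ψ a b c

/-- LU equivalence of three-qubit states. -/
def LUequiv (ψ φ : Fin 2 → Fin 2 → Fin 2 → ℂ) : Prop :=
  ∃ A B C : Matrix (Fin 2) (Fin 2) ℂ,
    A ∈ Matrix.unitaryGroup (Fin 2) ℂ ∧ B ∈ Matrix.unitaryGroup (Fin 2) ℂ ∧
    C ∈ Matrix.unitaryGroup (Fin 2) ℂ ∧ φ = luAct A B C ψ

open Matrix Complex

theorem Matrix.diagonal_mem_unitaryGroup {n R : Type*} [Fintype n] [DecidableEq n] [CommRing R]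
    [StarRing R] {a : n → R} (ha : ∀ i, a i * star (a i) = 1) :
    diagonal a ∈ unitaryGroup n R := by
  rw [mem_unitaryGroup_iff, star_eq_conjTranspose, diagonal_conjTranspose, diagonal_mul_diagonal,
    ← diagonal_one]
  exact congrArg diagonal (funext ha)

theorem luAct_diagonal (a b c : Fin 2 → ℂ) (ψ : Fin 2 → Fin 2 → Fin 2 → ℂ) :
    luAct (diagonal a) (diagonal b) (diagonal c) ψ = fun i j k => a i * b j * c k * ψ i j k := by
  funext i j k
  simp [luAct, diagonal_apply, ite_mul]

noncomputable def phaseGate (t : ℝ) : Matrix (Fin 2) (Fin 2) ℂ := diagonal ![1, exp (I * t)]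

theorem phaseGate_mem_unitaryGroup (t : ℝ) : phaseGate t ∈ unitaryGroup (Fin 2) ℂ := by
  refine diagonal_mem_unitaryGroup fun i => ?_
  fin_cases i
  · simp
  · simp [mul_conj', mul_comm I, norm_exp_ofReal_mul_I]

theorem stmt_15_general (l0 l1 l2 l3 : ℝ) (φ ψangle : ℝ)
    (Ψ Φ : Fin 2 → Fin 2 → Fin 2 → ℂ)
    (hΨ : Ψ = fun i j k =>
      if i = 0 ∧ j = 0 ∧ k = 0 then (l0 : ℂ)
      else if i = 1 ∧ j = 0 ∧ k = 0 then (l1 : ℂ) * Complex.exp (Complex.I * φ)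
      else if i = 1 ∧ j = 0 ∧ k = 1 then (l2 : ℂ)
      else if i = 1 ∧ j = 1 ∧ k = 0 then (l3 : ℂ)
      else 0)
    (hΦ : Φ = fun i j k =>
      if i = 0 ∧ j = 0 ∧ k = 0 then (l0 : ℂ)
      else if i = 1 ∧ j = 0 ∧ k = 0 then (l1 : ℂ) * Complex.exp (Complex.I * ψangle)
      else if i = 1 ∧ j = 0 ∧ k = 1 then (l2 : ℂ)
      else if i = 1 ∧ j = 1 ∧ k = 0 then (l3 : ℂ)
      else 0) :
    LUequiv Ψ Φ := by
  refine ⟨_, _, _, phaseGate_mem_unitaryGroup (ψangle - φ),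
    phaseGate_mem_unitaryGroup (φ - ψangle),
    phaseGate_mem_unitaryGroup (φ - ψangle), ?_⟩
  have hcancel : exp (I * (ψangle - φ)) * exp (I * (φ - ψangle)) = 1 := by
    rw [← exp_add, ← mul_add, sub_add_sub_cancel', sub_self, mul_zero, exp_zero]
  have hshift : exp (I * (ψangle - φ)) * exp (I * φ) = exp (I * ψangle) := by
    rw [← exp_add, ← mul_add, sub_add_cancel]
  rw [phaseGate, phaseGate, luAct_diagonal, hΨ, hΦ]
  funext i j k
  fin_cases i <;> fin_cases j <;> fin_cases k <;> simp [hcancel, hshift, mul_left_comm]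

theorem stmt_15 (l0 l1 l2 l3 : ℝ) (φ ψangle : ℝ)
    (hl0 : 0 < l0) (hl2 : 0 < l2) (hl3 : 0 < l3) (hl1 : 0 ≤ l1)
    (hnorm : l0^2 + l1^2 + l2^2 + l3^2 = 1)
    (Ψ Φ : Fin 2 → Fin 2 → Fin 2 → ℂ)
    (hΨ : Ψ = fun i j k =>
      if i = 0 ∧ j = 0 ∧ k = 0 then (l0 : ℂ)
      else if i = 1 ∧ j = 0 ∧ k = 0 then (l1 : ℂ) * Complex.exp (Complex.I * φ)
      else if i = 1 ∧ j = 0 ∧ k = 1 then (l2 : ℂ)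
      else if i = 1 ∧ j = 1 ∧ k = 0 then (l3 : ℂ)
      else 0)
    (hΦ : Φ = fun i j k =>
      if i = 0 ∧ j = 0 ∧ k = 0 then (l0 : ℂ)
      else if i = 1 ∧ j = 0 ∧ k = 0 then (l1 : ℂ) * Complex.exp (Complex.I * ψangle)
      else if i = 1 ∧ j = 0 ∧ k = 1 then (l2 : ℂ)
      else if i = 1 ∧ j = 1 ∧ k = 0 then (l3 : ℂ)
      else 0) :
    LUequiv Ψ Φ :=
  stmt_15_general l0 l1 l2 l3 φ ψangle Ψ Φ hΨ hΦ
end
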